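/- arXiv:2406.09659 — 2 statements merged into one kernel-verified Lean document; each statement's English description precedes it below -/
import Mathlib

section
/- Let n ≥ 1, let J = (j₁,j₂,j₃) be nonnegative integers with j₁+j₂+j₃ = n, set v = (√(j₁/n), √(j₂/n), √(j₃/n)), and define b_{n,J}(x) = √(n choose J) · x₁^{j₁} x₂^{j₂} x₃^{j₃} for x in the unit sphere of ℝ³ with all coordinates nonnegative. Define f_v(x) = log(v₁^{v₁²} v₂^{v₂²} v₃^{v₃²}) - log(x₁^{v₁²} x₂^{v₂²} x₃^{v₃²}) with the convention 0^0 = 1. Then 0 ≤ b_{n,J}(x) ≤ exp(-n·f_v(x)). -/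
/-!
Write `P(y) = ∏ yᵢ ^ vᵢ²`. Since `n vᵢ² = jᵢ`, `P(y)ⁿ = ∏ yᵢ ^ jᵢ`, so
`exp (-n f_v(x)) = (P(x) / P(v))ⁿ` and `b_{n,J}(x) = b_{n,J}(v) · (P(x) / P(v))ⁿ`.
It remains to see `b_{n,J}(v) ≤ 1`, i.e. `(n choose J) ∏ jᵢ ^ jᵢ ≤ nⁿ`: the left side is one term
of the multinomial expansion of `(j₁ + j₂ + j₃)ⁿ`.
-/

open Finset

theorem Nat.multinomial_mul_prod_pow_self_le {ι : Type*} [Fintype ι] [DecidableEq ι] (J : ι → ℕ) :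
    Nat.multinomial univ J * ∏ i, J i ^ J i ≤ (∑ i, J i) ^ ∑ i, J i := by
  rw [sum_pow_eq_sum_piAntidiag]
  exact single_le_sum (f := fun k ↦ Nat.multinomial univ k * ∏ i, J i ^ k i)
    (fun _ _ ↦ Nat.zero_le _) (by simp [mem_piAntidiag])

theorem multinomial_mul_prod_div_pow_le_one {ι : Type*} [Fintype ι] [DecidableEq ι] (J : ι → ℕ)
    (n : ℕ) (hJ : ∑ i, J i = n) :
    (Nat.multinomial univ J : ℝ) * ∏ i, ((J i : ℝ) / n) ^ J i ≤ 1 := by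
  have hle : (Nat.multinomial univ J * ∏ i, (J i : ℝ) ^ J i) ≤ (n : ℝ) ^ n := by
    exact_mod_cast hJ ▸ Nat.multinomial_mul_prod_pow_self_le J
  have hpos : (0 : ℝ) < (n : ℝ) ^ n := by exact_mod_cast Nat.pow_self_pos
  have hprod : ∏ i, ((J i : ℝ) / n) ^ J i = (∏ i, (J i : ℝ) ^ J i) / (n : ℝ) ^ n := by
    rw [prod_congr rfl fun i _ ↦ div_pow _ _ _, prod_div_distrib, prod_pow_eq_pow_sum, hJ]
  rw [hprod, mul_div_assoc', div_le_one hpos]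
  exact hle

theorem cast_div_mul_cancel_of_sum_eq {ι : Type*} [Fintype ι] {J : ι → ℕ} {n : ℕ}
    (hJ : ∑ i, J i = n) (i : ι) : (J i : ℝ) / n * n = J i := by
  refine div_mul_cancel_of_imp fun hn ↦ ?_
  have hJi : J i ≤ n := hJ ▸ single_le_sum (fun _ _ ↦ Nat.zero_le _) (mem_univ i)
  rw [Nat.cast_eq_zero] at hn ⊢
  exact Nat.eq_zero_of_le_zero (hn ▸ hJi)

theorem prod_rpow_pow_of_mul_eq {ι : Type*} [Fintype ι] {y w : ι → ℝ} (hy : ∀ i, 0 ≤ y i)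
    {n : ℕ} {J : ι → ℕ} (hw : ∀ i, w i * n = J i) :
    (∏ i, y i ^ w i) ^ n = ∏ i, y i ^ J i := by
  rw [← prod_pow]
  refine prod_congr rfl fun i _ ↦ ?_
  rw [← Real.rpow_mul_natCast (hy i), hw i, Real.rpow_natCast]

theorem prod_rpow_pos {ι : Type*} [Fintype ι] {y w : ι → ℝ} (hy : ∀ i, w i ≠ 0 → 0 < y i) :
    0 < ∏ i, y i ^ w i :=
  prod_pos fun i _ ↦ by
    rcases eq_or_ne (w i) 0 with h | h
    · simp [h]
    · exact Real.rpow_pos_of_pos (hy i h) _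

theorem sqrt_multinomial_mul_prod_sqrt_pow_le_one {ι : Type*} [Fintype ι] [DecidableEq ι]
    (J : ι → ℕ) (n : ℕ) (hJ : ∑ i, J i = n) :
    √(Nat.multinomial univ J : ℝ) * ∏ i, √((J i : ℝ) / n) ^ J i ≤ 1 := by
  have hsq : (√(Nat.multinomial univ J : ℝ) * ∏ i, √((J i : ℝ) / n) ^ J i) ^ 2
      = (Nat.multinomial univ J : ℝ) * ∏ i, ((J i : ℝ) / n) ^ J i := by
    rw [mul_pow, Real.sq_sqrt (Nat.cast_nonneg _), ← prod_pow]
    congr 1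
    refine prod_congr rfl fun i _ ↦ ?_
    rw [← pow_mul, mul_comm, pow_mul, Real.sq_sqrt (by positivity)]
  rw [← pow_le_one_iff_of_nonneg (by positivity) two_ne_zero, hsq]
  exact multinomial_mul_prod_div_pow_le_one J n hJ

theorem Real.exp_neg_mul_log_sub_log {p q : ℝ} (hp : 0 < p) (hq : 0 < q) (n : ℕ) :
    exp (-(n : ℝ) * (log q - log p)) = (p / q) ^ n := by
  rw [← exp_log (div_pos hp hq), ← exp_nat_mul, log_div hp.ne' hq.ne']
  ring_nf

theorem kostlan_basis_localisation_general (n : ℕ)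
    (J : Fin 3 → ℕ) (hJ : ∑ i, J i = n)
    (x : Fin 3 → ℝ) (hx : ∀ i, 0 ≤ x i)
    (v : Fin 3 → ℝ) (hv : ∀ i, v i = Real.sqrt ((J i : ℝ) / n))
    (b fv : ℝ)
    (hb : b = Real.sqrt (Nat.multinomial Finset.univ J : ℝ) * ∏ i, x i ^ (J i))
    (hfv : fv = Real.log (∏ i, (v i) ^ ((v i) ^ 2 : ℝ))
              - Real.log (∏ i, (x i) ^ ((v i) ^ 2 : ℝ))) :
    0 ≤ b ∧ b ≤ Real.exp (-(n : ℝ) * fv) := by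
  refine ⟨hb ▸ mul_nonneg (Real.sqrt_nonneg _) (prod_nonneg fun i _ ↦ pow_nonneg (hx i) _), ?_⟩
  -- If some `x i` with `J i ≠ 0` vanishes then `b = 0`; this case must be split off because
  -- `fv` would then involve the junk value `log 0 = 0`.
  by_cases hzero : ∃ i, x i = 0 ∧ J i ≠ 0
  · obtain ⟨i, hxi, hJi⟩ := hzero
    rw [hb, prod_eq_zero (mem_univ i) (by rw [hxi, zero_pow hJi]), mul_zero]
    exact (Real.exp_pos _).le
  push Not at hzero
  have hvnn : ∀ i, 0 ≤ v i := fun i ↦ hv i ▸ Real.sqrt_nonneg _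
  have hvsq : ∀ i, v i ^ 2 = J i / n := fun i ↦ by rw [hv i, Real.sq_sqrt (by positivity)]
  have hw : ∀ i, v i ^ 2 * n = J i := fun i ↦ hvsq i ▸ cast_div_mul_cancel_of_sum_eq hJ i
  set Px := ∏ i, x i ^ (v i ^ 2)
  set Pv := ∏ i, v i ^ (v i ^ 2)
  have hPx : 0 < Px := prod_rpow_pos fun i hi ↦ (hx i).lt_of_ne fun h ↦
    hi (by rw [hvsq i, hzero i h.symm, Nat.cast_zero, zero_div])
  have hPv : 0 < Pv := prod_rpow_pos fun i hi ↦ (hvnn i).lt_of_ne fun h ↦ hi (by rw [← h]; ring)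
  have hpeak : √(Nat.multinomial univ J : ℝ) * Pv ^ n ≤ 1 := by
    rw [prod_rpow_pow_of_mul_eq hvnn hw]
    simp only [hv]
    exact sqrt_multinomial_mul_prod_sqrt_pow_le_one J n hJ
  rw [hfv, Real.exp_neg_mul_log_sub_log hPx hPv, hb, ← prod_rpow_pow_of_mul_eq hx hw]
  calc √(Nat.multinomial univ J : ℝ) * Px ^ n
      = (√(Nat.multinomial univ J : ℝ) * Pv ^ n) * (Px / Pv) ^ n := by
        rw [div_pow]; field_simp
    _ ≤ (Px / Pv) ^ n := mul_le_of_le_one_left (by positivity) hpeak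

/-- Spatial localisation bound for the Kostlan basis functions:
`0 ≤ b_{n,J}(x) ≤ exp (-n * f_v x)`. -/
theorem kostlan_basis_localisation (n : ℕ) (hn : 1 ≤ n)
    (J : Fin 3 → ℕ) (hJ : ∑ i, J i = n)
    (x : Fin 3 → ℝ) (hxs : ∑ i, (x i) ^ 2 = 1) (hx : ∀ i, 0 ≤ x i)
    (v : Fin 3 → ℝ) (hv : ∀ i, v i = Real.sqrt ((J i : ℝ) / n))
    (b fv : ℝ)
    (hb : b = Real.sqrt (Nat.multinomial Finset.univ J : ℝ) * ∏ i, x i ^ (J i))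
    (hfv : fv = Real.log (∏ i, (v i) ^ ((v i) ^ 2 : ℝ))
              - Real.log (∏ i, (x i) ^ ((v i) ^ 2 : ℝ))) :
    0 ≤ b ∧ b ≤ Real.exp (-(n : ℝ) * fv) :=
  kostlan_basis_localisation_general n J hJ x hx v hv b fv hb hfv
end

section
/- For every real u with 0 < u < 1, one has ∫₀^∞ e^{-w}·u^{tanh(w/2)} dw ≤ 2/|log u|. -/
/-!
Write `t(w) = tanh (w / 2)`, so that `t' = 1 / (2 cosh² (w / 2))`. For `w ≥ 0` one has
`cosh (w / 2) ≤ e^{w / 2}`, hence `e^{-w} ≤ 2 t'(w)`, and the integral is at most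
`2 ∫₀^∞ u^{t(w)} t'(w) dw = 2 ∫₀¹ u^t dt = 2 (1 - u) / |log u|`.
-/

open Real MeasureTheory Set Filter Topology

namespace Real

theorem hasDerivAt_tanh (x : ℝ) : HasDerivAt tanh (cosh x ^ 2)⁻¹ x := by
  have h := (hasDerivAt_sinh x).div (hasDerivAt_cosh x) (cosh_pos x).ne'
  rw [← sq, ← sq, cosh_sq_sub_sinh_sq, one_div] at h
  exact h.congr_of_eventuallyEq (.of_forall tanh_eq_sinh_div_cosh)

theorem tanh_eq_one_sub (x : ℝ) : tanh x = 1 - 2 / (exp (2 * x) + 1) := by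
  have h2x : exp (2 * x) = exp x * exp x := by rw [← exp_add, two_mul]
  rw [tanh_eq, exp_neg, h2x]
  field_simp
  ring

theorem tendsto_tanh_atTop : Tendsto tanh atTop (𝓝 1) := by
  have h : Tendsto (fun x : ℝ ↦ exp (2 * x) + 1) atTop atTop :=
    tendsto_atTop_add_const_right _ _
      (tendsto_exp_atTop.comp (tendsto_id.const_mul_atTop two_pos))
  simpa [← tanh_eq_one_sub] using (h.const_div_atTop 2).const_sub 1

theorem exp_neg_le_inv_cosh_half_sq {w : ℝ} (hw : 0 ≤ w) : exp (-w) ≤ (cosh (w / 2) ^ 2)⁻¹ := by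
  have hcosh : cosh (w / 2) ≤ exp (w / 2) := by
    rw [cosh_eq]
    linarith [exp_le_exp.2 (show -(w / 2) ≤ w / 2 by linarith)]
  calc exp (-w) = (exp (w / 2) ^ 2)⁻¹ := by rw [← exp_nat_mul, ← exp_neg]; ring_nf
    _ ≤ (cosh (w / 2) ^ 2)⁻¹ := by gcongr

end Real

section RpowTanhHalf

variable {u : ℝ}

theorem hasDerivAt_rpow_tanh_half (hu0 : 0 < u) (hu1 : u ≠ 1) (w : ℝ) :
    HasDerivAt (fun w ↦ 2 / log u * u ^ tanh (w / 2)) (u ^ tanh (w / 2) / cosh (w / 2) ^ 2) w := by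
  have hlog : log u ≠ 0 := log_ne_zero_of_pos_of_ne_one hu0 hu1
  have htanh : HasDerivAt (fun w ↦ tanh (w / 2)) ((cosh (w / 2) ^ 2)⁻¹ * (1 / 2)) w :=
    (hasDerivAt_tanh (w / 2)).comp (h₂ := tanh) w ((hasDerivAt_id' w).div_const 2)
  refine ((htanh.const_rpow hu0).const_mul (2 / log u)).congr_deriv ?_
  field_simp

theorem tendsto_rpow_tanh_half_atTop (hu0 : 0 < u) :
    Tendsto (fun w ↦ u ^ tanh (w / 2)) atTop (𝓝 u) := by
  have h := ((continuous_const_rpow hu0.ne').tendsto 1).comp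
    (tendsto_tanh_atTop.comp (tendsto_id.atTop_div_const two_pos))
  rwa [rpow_one] at h

theorem integrableOn_rpow_tanh_half_div_cosh_sq (hu0 : 0 < u) (hu1 : u ≠ 1) :
    IntegrableOn (fun w ↦ u ^ tanh (w / 2) / cosh (w / 2) ^ 2) (Ioi 0) :=
  integrableOn_Ioi_deriv_of_nonneg' (fun w _ ↦ hasDerivAt_rpow_tanh_half hu0 hu1 w)
    (fun w _ ↦ by positivity) ((tendsto_rpow_tanh_half_atTop hu0).const_mul _)

theorem integral_rpow_tanh_half_div_cosh_sq (hu0 : 0 < u) (hu1 : u ≠ 1) :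
    ∫ w in Ioi 0, u ^ tanh (w / 2) / cosh (w / 2) ^ 2 = 2 * (u - 1) / log u := by
  rw [integral_Ioi_of_hasDerivAt_of_nonneg' (fun w _ ↦ hasDerivAt_rpow_tanh_half hu0 hu1 w)
    (fun w _ ↦ by positivity) ((tendsto_rpow_tanh_half_atTop hu0).const_mul _)]
  simp only [zero_div, tanh_zero, rpow_zero]
  ring

end RpowTanhHalf

theorem integral_exp_mul_rpow_tanh_le (u : ℝ) (h0 : 0 < u) (h1 : u < 1) :
    ∫ w in Set.Ioi (0 : ℝ), Real.exp (-w) * u ^ Real.tanh (w / 2) ≤ 2 / |Real.log u| := by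
  have hlog : log u < 0 := log_neg h0 h1
  have hpointwise : ∀ w ∈ Ioi (0 : ℝ),
      exp (-w) * u ^ tanh (w / 2) ≤ u ^ tanh (w / 2) / cosh (w / 2) ^ 2 := fun w hw ↦
    (mul_le_mul_of_nonneg_right (exp_neg_le_inv_cosh_half_sq (le_of_lt hw))
      (rpow_nonneg h0.le _)).trans_eq (inv_mul_eq_div _ _)
  calc ∫ w in Ioi 0, exp (-w) * u ^ tanh (w / 2)
      ≤ ∫ w in Ioi 0, u ^ tanh (w / 2) / cosh (w / 2) ^ 2 :=
        integral_mono_of_nonneg (.of_forall fun w ↦ by positivity)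
          (integrableOn_rpow_tanh_half_div_cosh_sq h0 h1.ne)
          ((ae_restrict_iff' measurableSet_Ioi).2 (.of_forall hpointwise))
    _ = 2 * (1 - u) / |log u| := by
        rw [integral_rpow_tanh_half_div_cosh_sq h0 h1.ne, abs_of_neg hlog, div_neg, ← neg_div]
        ring
    _ ≤ 2 / |log u| := by gcongr; linarith
end
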